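/- arXiv:2504.19893 — 2 statements merged into one kernel-verified Lean document; each statement's English description precedes it below -/
import Mathlib

section
/- Let G be a connected, non-complete finite simple graph with connectivity κ(G) = k + 1. Let Θ_G be any set of derivations containing θ_0, …, θ_k and, for every minimal separator T of G and every connected component C of G ∖ T, a descending chain of (T,C). Then for every i > k the derivation θ_i lies in the S-submodule generated by Θ_G. -/
open MvPolynomial

noncomputable section

/-- The module `D(A(G))` of `A(G)`-derivations of a graphic arrangement:
derivations `θ` of `S = K[x_1,…,x_ℓ]` with `θ(x_i - x_j) ∈ (x_i - x_j)·S`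
for every edge `{i,j}` of `G`. -/
def derModule (K : Type*) [Field K] (ℓ : ℕ) (G : SimpleGraph (Fin ℓ)) :
    Submodule (MvPolynomial (Fin ℓ) K)
      (Derivation K (MvPolynomial (Fin ℓ) K) (MvPolynomial (Fin ℓ) K)) where
  carrier := {θ | ∀ i j : Fin ℓ, G.Adj i j →
    θ (X i - X j) ∈ Ideal.span {(X i - X j : MvPolynomial (Fin ℓ) K)}}
  add_mem' := fun ha hb i j hij => by
    simpa using add_mem (ha i j hij) (hb i j hij)
  zero_mem' := fun i j hij => by simp
  smul_mem' := fun c a ha i j hij => by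
    simpa [smul_eq_mul] using Ideal.mul_mem_left _ c (ha i j hij)

/-- The derivation `θ_k = Σ_i x_i^k ∂_{x_i}`. -/
def theta (K : Type*) [Field K] (ℓ : ℕ) (k : ℕ) :
    Derivation K (MvPolynomial (Fin ℓ) K) (MvPolynomial (Fin ℓ) K) :=
  ∑ i : Fin ℓ, (X i ^ k : MvPolynomial (Fin ℓ) K) • pderiv i

/-- The separator-based derivation `θ_C^T = Σ_{i∈C} ∏_{t∈T} (x_i - x_t) ∂_{x_i}`. -/
def sepDer (K : Type*) [Field K] (ℓ : ℕ) (T C : Finset (Fin ℓ)) :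
    Derivation K (MvPolynomial (Fin ℓ) K) (MvPolynomial (Fin ℓ) K) :=
  ∑ i ∈ C, (∏ t ∈ T, (X i - X t : MvPolynomial (Fin ℓ) K)) • pderiv i

/-- The derivation `θ_C^{T,p} = Σ_{i∈C} ∏_{t∈T} (x_i - x_t)·p(x_i) ∂_{x_i}`
for a one-variable polynomial `p ∈ S[y]`. -/
def sepDerP (K : Type*) [Field K] (ℓ : ℕ) (T C : Finset (Fin ℓ))
    (p : Polynomial (MvPolynomial (Fin ℓ) K)) :
    Derivation K (MvPolynomial (Fin ℓ) K) (MvPolynomial (Fin ℓ) K) :=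
  ∑ i ∈ C, ((∏ t ∈ T, (X i - X t : MvPolynomial (Fin ℓ) K)) * p.eval (X i)) • pderiv i

/-- `T` separates the vertices `a` and `b` in `G`: `a, b ∉ T` and every
walk from `a` to `b` meets `T`. -/
def Separates {ℓ : ℕ} (G : SimpleGraph (Fin ℓ)) (T : Finset (Fin ℓ)) (a b : Fin ℓ) : Prop :=
  a ∉ T ∧ b ∉ T ∧ ∀ p : G.Walk a b, ∃ v ∈ p.support, v ∈ T

/-- `T` is a separator of `G`. -/
def IsSeparator {ℓ : ℕ} (G : SimpleGraph (Fin ℓ)) (T : Finset (Fin ℓ)) : Prop :=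
  ∃ a b, Separates G T a b

/-- `T` is a minimal separator of `G`: it is an `(a,b)`-separator for some `a, b`
and no proper subset separates `a` and `b`. -/
def IsMinimalSeparator {ℓ : ℕ} (G : SimpleGraph (Fin ℓ)) (T : Finset (Fin ℓ)) : Prop :=
  ∃ a b, Separates G T a b ∧ ∀ T' ⊂ T, ¬ Separates G T' a b

/-- `C` is (the vertex set of) a connected component of `G ∖ T`. -/
def IsCompOf {ℓ : ℕ} (G : SimpleGraph (Fin ℓ)) (T C : Finset (Fin ℓ)) : Prop :=
  (∀ v ∈ C, v ∉ T) ∧ C.Nonempty ∧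
  (G.induce (C : Set (Fin ℓ))).Connected ∧
  ∀ v ∈ C, ∀ w : Fin ℓ, w ∉ C → w ∉ T → ¬ G.Adj v w

/-- `G` is `k`-connected: `|V(G)| > k` and removing fewer than `k` vertices
leaves `G` connected. -/
def IsKConnected {ℓ : ℕ} (G : SimpleGraph (Fin ℓ)) (k : ℕ) : Prop :=
  k < ℓ ∧ ∀ X : Finset (Fin ℓ), X.card < k → (G.induce ((X : Set (Fin ℓ))ᶜ)).Connected

/-- A nonzero derivation is homogeneous of polynomial degree `p` if all its
coefficients `θ(x_i)` are homogeneous of degree `p` (or zero). -/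
def IsHomogeneousDer {K : Type*} [Field K] {ℓ : ℕ}
    (θ : Derivation K (MvPolynomial (Fin ℓ) K) (MvPolynomial (Fin ℓ) K)) (p : ℕ) : Prop :=
  θ ≠ 0 ∧ ∀ i : Fin ℓ, (θ (X i)).IsHomogeneous p

/-- A minimal generating set of `D(A(G))`: a finite set of homogeneous derivations
spanning `D(A(G))` over `S` such that no proper subset spans it. -/
def IsMinimalGenSet (K : Type*) [Field K] (ℓ : ℕ) (G : SimpleGraph (Fin ℓ))
    (Θ : Finset (Derivation K (MvPolynomial (Fin ℓ) K) (MvPolynomial (Fin ℓ) K))) : Prop :=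
  (∀ θ ∈ Θ, ∃ p : ℕ, IsHomogeneousDer θ p) ∧
  Submodule.span (MvPolynomial (Fin ℓ) K) (Θ : Set _) = derModule K ℓ G ∧
  ∀ Θ' ⊂ Θ, Submodule.span (MvPolynomial (Fin ℓ) K) (Θ' : Set _) ≠ derModule K ℓ G
/-- For an ordering `v_1,…,v_k` of a component, `C_i = {v_1,…,v_i}`. -/
def chainC {ℓ : ℕ} {k : ℕ} (v : Fin k → Fin ℓ) (i : Fin k) : Finset (Fin ℓ) :=
  Finset.image v (Finset.univ.filter (· ≤ i))

/-- For an ordering `v_1,…,v_k` of a component, `T_i = (∪_{j ≤ i} N(v_j)) ∖ C_i`. -/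
def chainT {ℓ : ℕ} (G : SimpleGraph (Fin ℓ)) [DecidableRel G.Adj] {k : ℕ}
    (v : Fin k → Fin ℓ) (i : Fin k) : Finset (Fin ℓ) :=
  ((Finset.univ.filter (· ≤ i)).biUnion fun j => G.neighborFinset (v j)) \ chainC v i

/-- `Θ` contains a descending chain for the pair `(T, C)`: there is an ordering
`v_1,…,v_k` of the vertices of `C` such that all the derivations
`θ_{C_i}^{T_i}` (`1 ≤ i ≤ k`) belong to `Θ`. -/
def HasDescendingChain (K : Type*) [Field K] (ℓ : ℕ) (G : SimpleGraph (Fin ℓ))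
    [DecidableRel G.Adj]
    (Θ : Set (Derivation K (MvPolynomial (Fin ℓ) K) (MvPolynomial (Fin ℓ) K)))
    (T C : Finset (Fin ℓ)) : Prop :=
  ∃ v : Fin C.card → Fin ℓ, Function.Injective v ∧ Finset.image v Finset.univ = C ∧
    ∀ i : Fin C.card, sepDer K ℓ (chainT G v i) (chainC v i) ∈ Θ


section GraphAux

open Finset

variable {ℓ : ℕ} {G : SimpleGraph (Fin ℓ)}

lemma reachable_induce_of_walk {s : Set (Fin ℓ)} {a b : Fin ℓ} (p : G.Walk a b) :
    (∀ x ∈ p.support, x ∈ s) → ∀ (ha : a ∈ s) (hb : b ∈ s),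
      (G.induce s).Reachable ⟨a, ha⟩ ⟨b, hb⟩ := by
  induction p with
  | nil => intro _ ha hb; exact SimpleGraph.Reachable.refl _
  | cons h q ih =>
    rename_i u c b'
    intro hp ha hb
    have hc : c ∈ s := hp c (by simp)
    have h1 : (G.induce s).Adj ⟨u, ha⟩ ⟨c, hc⟩ := h
    exact h1.reachable.trans (ih (fun x hx => hp x (by simp [hx])) hc hb)

lemma exists_walk_of_reachable_induce {s : Set (Fin ℓ)} {a b : Fin ℓ} {ha : a ∈ s} {hb : b ∈ s}
    (h : (G.induce s).Reachable ⟨a, ha⟩ ⟨b, hb⟩) :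
    ∃ p : G.Walk a b, ∀ x ∈ p.support, x ∈ s := by
  obtain ⟨q⟩ := h
  refine ⟨q.map (SimpleGraph.Embedding.induce s).toHom, fun x hx => ?_⟩
  erw [SimpleGraph.Walk.support_map] at hx
  obtain ⟨y, hy, rfl⟩ := List.mem_map.mp hx
  exact y.2

/-- Reachability avoiding the set `T`. -/
def AvoidReach (G : SimpleGraph (Fin ℓ)) (T : Finset (Fin ℓ)) (w u : Fin ℓ) : Prop :=
  ∃ p : G.Walk w u, ∀ x ∈ p.support, x ∉ T

open scoped Classical in
/-- The connected component of `w` in `G ∖ T`. -/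
def gcomp (G : SimpleGraph (Fin ℓ)) (T : Finset (Fin ℓ)) (w : Fin ℓ) : Finset (Fin ℓ) :=
  Finset.univ.filter (AvoidReach G T w)

lemma mem_gcomp {T : Finset (Fin ℓ)} {w u : Fin ℓ} :
    u ∈ gcomp G T w ↔ AvoidReach G T w u := by
  simp [gcomp]

lemma AvoidReach.notMem_left {T : Finset (Fin ℓ)} {w u : Fin ℓ}
    (h : AvoidReach G T w u) : w ∉ T := by
  obtain ⟨p, hp⟩ := h
  exact hp w p.start_mem_support

lemma AvoidReach.notMem_right {T : Finset (Fin ℓ)} {w u : Fin ℓ}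
    (h : AvoidReach G T w u) : u ∉ T := by
  obtain ⟨p, hp⟩ := h
  exact hp u p.end_mem_support

lemma AvoidReach.rfl {T : Finset (Fin ℓ)} {w : Fin ℓ} (hw : w ∉ T) : AvoidReach G T w w :=
  ⟨SimpleGraph.Walk.nil, by simpa using hw⟩

lemma AvoidReach.symm {T : Finset (Fin ℓ)} {w u : Fin ℓ}
    (h : AvoidReach G T w u) : AvoidReach G T u w := by
  obtain ⟨p, hp⟩ := h
  exact ⟨p.reverse, fun x hx => hp x (by simpa [SimpleGraph.Walk.support_reverse] using hx)⟩

lemma AvoidReach.trans {T : Finset (Fin ℓ)} {w u z : Fin ℓ}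
    (h : AvoidReach G T w u) (h' : AvoidReach G T u z) : AvoidReach G T w z := by
  obtain ⟨p, hp⟩ := h
  obtain ⟨q, hq⟩ := h'
  refine ⟨p.append q, fun x hx => ?_⟩
  rcases (SimpleGraph.Walk.mem_support_append_iff _ _).mp hx with hx | hx
  · exact hp x hx
  · exact hq x hx

lemma AvoidReach.of_mem_support {T : Finset (Fin ℓ)} {w u x : Fin ℓ}
    (p : G.Walk w u) (hp : ∀ y ∈ p.support, y ∉ T) (hx : x ∈ p.support) :
    AvoidReach G T w x :=
  ⟨p.takeUntil x hx, fun y hy => hp y (SimpleGraph.Walk.support_takeUntil_subset _ hx hy)⟩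

lemma gcomp_eq_of_mem {T : Finset (Fin ℓ)} {w u : Fin ℓ} (h : u ∈ gcomp G T w) :
    gcomp G T u = gcomp G T w := by
  rw [mem_gcomp] at h
  ext z
  rw [mem_gcomp, mem_gcomp]
  exact ⟨fun hz => h.trans hz, fun hz => h.symm.trans hz⟩

lemma isCompOf_gcomp {T : Finset (Fin ℓ)} {w : Fin ℓ} (hw : w ∉ T) :
    IsCompOf G T (gcomp G T w) := by
  have hwmem : w ∈ gcomp G T w := mem_gcomp.mpr (AvoidReach.rfl hw)
  refine ⟨fun u hu => (mem_gcomp.mp hu).notMem_right, ⟨w, hwmem⟩, ?_, ?_⟩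
  · rw [SimpleGraph.connected_iff]
    refine ⟨?_, ⟨⟨w, hwmem⟩⟩⟩
    rintro ⟨x, hx⟩ ⟨y, hy⟩
    obtain ⟨px, hpx⟩ := mem_gcomp.mp (hx : x ∈ gcomp G T w)
    obtain ⟨py, hpy⟩ := mem_gcomp.mp (hy : y ∈ gcomp G T w)
    have hsup : ∀ z ∈ (px.reverse.append py).support, z ∈ (gcomp G T w : Set (Fin ℓ)) := by
      intro z hz
      rcases (SimpleGraph.Walk.mem_support_append_iff _ _).mp hz with hz | hz
      · exact mem_gcomp.mpr (AvoidReach.of_mem_support px hpx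
          (by simpa [SimpleGraph.Walk.support_reverse] using hz))
      · exact mem_gcomp.mpr (AvoidReach.of_mem_support py hpy hz)
    exact reachable_induce_of_walk (px.reverse.append py) hsup hx hy
  · intro u hu x hx hxT hadj
    apply hx
    obtain ⟨p, hp⟩ := mem_gcomp.mp hu
    refine mem_gcomp.mpr ⟨p.concat hadj, fun y hy => ?_⟩
    rw [SimpleGraph.Walk.support_concat] at hy
    simp only [List.concat_eq_append, List.mem_append, List.mem_singleton] at hy
    rcases hy with hy | rfl
    · exact hp y hy
    · exact hxT

lemma not_separates_small {k : ℕ}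
    (hcon : ∀ X : Finset (Fin ℓ), X.card < k → (G.induce ((X : Set (Fin ℓ))ᶜ)).Connected)
    {X : Finset (Fin ℓ)} (hX : X.card < k) (a b : Fin ℓ) : ¬ Separates G X a b := by
  rintro ⟨ha, hb, hw⟩
  have ha' : a ∈ ((X : Set (Fin ℓ)))ᶜ := by simpa using ha
  have hb' : b ∈ ((X : Set (Fin ℓ)))ᶜ := by simpa using hb
  obtain ⟨p, hp⟩ := exists_walk_of_reachable_induce
    ((hcon X hX).preconnected ⟨a, ha'⟩ ⟨b, hb'⟩)
  obtain ⟨x, hx, hxX⟩ := hw p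
  exact hp x hx (by simpa using hxX)

lemma exists_min_sep (hnc : G ≠ ⊤) {k : ℕ}
    (hκ₁ : IsKConnected G (k + 1)) (hκ₂ : ¬ IsKConnected G (k + 2)) :
    ∃ T : Finset (Fin ℓ), T.card = k + 1 ∧ IsMinimalSeparator G T := by
  obtain ⟨hlt, hcon⟩ := hκ₁
  have hab : ∃ a b : Fin ℓ, a ≠ b ∧ ¬ G.Adj a b := by
    by_contra h
    push_neg at h
    exact hnc (by
      ext a b
      simp only [SimpleGraph.top_adj]
      exact ⟨fun h' => h'.ne, fun hne => h a b hne⟩)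
  obtain ⟨a, b, hne, hnadj⟩ := hab
  rw [IsKConnected, not_and_or] at hκ₂
  rcases hκ₂ with h | h
  · exfalso
    have hl : ℓ = k + 2 := by omega
    have hcard : (Finset.univ \ ({a, b} : Finset (Fin ℓ))).card = k := by
      rw [Finset.card_sdiff_of_subset (Finset.subset_univ _), Finset.card_univ, Fintype.card_fin,
        Finset.card_pair hne]
      omega
    refine not_separates_small hcon (X := Finset.univ \ {a, b}) (by omega) a b
      ⟨by simp, by simp, ?_⟩
    intro p
    cases p with
    | nil => exact absurd rfl hne
    | cons hadj q =>
      rename_i c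
      refine ⟨c, ?_, ?_⟩
      · rw [SimpleGraph.Walk.support_cons]
        exact List.mem_cons_of_mem _ q.start_mem_support
      · simp only [Finset.mem_sdiff, Finset.mem_univ, Finset.mem_insert,
          Finset.mem_singleton, true_and]
        push_neg
        constructor
        · rintro rfl; exact G.irrefl hadj
        · rintro rfl; exact hnadj hadj
  · push_neg at h
    obtain ⟨X, hXcard, hXncon⟩ := h
    have hge : k + 1 ≤ X.card := by
      by_contra hlt'
      exact hXncon (hcon X (by omega))
    have hXc : X.card = k + 1 := by omega
    have hvex : ∃ v, v ∉ X := by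
      by_contra hv
      push_neg at hv
      have : X = Finset.univ := Finset.eq_univ_iff_forall.mpr hv
      rw [this, Finset.card_univ, Fintype.card_fin] at hXc
      omega
    obtain ⟨v, hv⟩ := hvex
    rw [SimpleGraph.connected_iff] at hXncon
    have hnpre : ¬ (G.induce ((X : Set (Fin ℓ))ᶜ)).Preconnected := by
      intro hpre
      exact hXncon ⟨hpre, ⟨⟨v, by simpa using hv⟩⟩⟩
    rw [SimpleGraph.Preconnected] at hnpre
    push_neg at hnpre
    obtain ⟨x, y, hxy⟩ := hnpre
    refine ⟨X, hXc, x.1, y.1, ⟨x.2, y.2, ?_⟩, ?_⟩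
    · intro p
      by_contra hno
      push_neg at hno
      exact hxy (reachable_induce_of_walk p (fun z hz => by simpa using hno z hz) x.2 y.2)
    · intro T' hT'
      exact not_separates_small hcon (lt_of_lt_of_le (Finset.card_lt_card hT') hXc.le) _ _

end GraphAux


section AlgAux

open Finset

variable (K : Type*) [Field K] {ℓ : ℕ}

lemma sepDerP_subset {S T : Finset (Fin ℓ)} (hST : S ⊆ T) (C : Finset (Fin ℓ))
    (q : Polynomial (MvPolynomial (Fin ℓ) K)) :
    sepDerP K ℓ T C q
      = sepDerP K ℓ S C ((∏ t ∈ T \ S, (Polynomial.X - Polynomial.C (X t))) * q) := by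
  unfold sepDerP
  refine Finset.sum_congr rfl fun a _ => ?_
  congr 1
  rw [Polynomial.eval_mul, Polynomial.eval_prod]
  simp only [Polynomial.eval_sub, Polynomial.eval_X, Polynomial.eval_C]
  rw [← Finset.prod_sdiff hST]
  ring

lemma sepDerP_step (T' Tp Cp : Finset (Fin ℓ)) (j : Fin ℓ)
    (hjC : j ∉ Cp) (hjT : j ∉ T') (hTp : Tp ⊆ insert j T')
    (p : Polynomial (MvPolynomial (Fin ℓ) K)) :
    sepDerP K ℓ T' (insert j Cp) p
      = (Polynomial.eval (X j) p) • sepDer K ℓ T' (insert j Cp)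
        + sepDerP K ℓ Tp Cp
            ((∏ t ∈ (insert j T') \ Tp, (Polynomial.X - Polynomial.C (X t)))
              * (p /ₘ (Polynomial.X - Polynomial.C (X j)))) := by
  set q : Polynomial (MvPolynomial (Fin ℓ) K) := p /ₘ (Polynomial.X - Polynomial.C (X j)) with hqdef
  have hq : ∀ y : MvPolynomial (Fin ℓ) K,
      Polynomial.eval y p
        = (y - X j) * Polynomial.eval y q + Polynomial.eval (X j) p := by
    intro y
    conv_lhs => rw [← Polynomial.modByMonic_add_div p (Polynomial.X - Polynomial.C (X j))]
    rw [Polynomial.modByMonic_X_sub_C_eq_C_eval]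
    simp only [Polynomial.eval_add, Polynomial.eval_mul, Polynomial.eval_sub,
      Polynomial.eval_X, Polynomial.eval_C, ← hqdef]
    ring
  have split : ∀ a : Fin ℓ,
      ((∏ t ∈ T', (X a - X t : MvPolynomial (Fin ℓ) K)) * Polynomial.eval (X a) p)
          • (pderiv a : Derivation K (MvPolynomial (Fin ℓ) K) (MvPolynomial (Fin ℓ) K))
        = ((∏ t ∈ T', (X a - X t : MvPolynomial (Fin ℓ) K))
            * ((X a - X j) * Polynomial.eval (X a) q)) • pderiv a
          + (Polynomial.eval (X j) p : MvPolynomial (Fin ℓ) K)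
              • (((∏ t ∈ T', (X a - X t : MvPolynomial (Fin ℓ) K))) • pderiv a) := by
    intro a
    rw [smul_smul, ← add_smul]
    congr 1
    rw [hq (X a)]
    ring
  unfold sepDerP sepDer
  rw [Finset.smul_sum]
  calc ∑ a ∈ insert j Cp,
        ((∏ t ∈ T', (X a - X t : MvPolynomial (Fin ℓ) K)) * Polynomial.eval (X a) p) • pderiv a
      = ∑ a ∈ insert j Cp,
          (((∏ t ∈ T', (X a - X t : MvPolynomial (Fin ℓ) K))
              * ((X a - X j) * Polynomial.eval (X a) q)) • pderiv a
            + (Polynomial.eval (X j) p : MvPolynomial (Fin ℓ) K)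
                • (((∏ t ∈ T', (X a - X t : MvPolynomial (Fin ℓ) K))) • pderiv a)) :=
        Finset.sum_congr rfl fun a _ => split a
    _ = ∑ a ∈ insert j Cp,
          ((∏ t ∈ T', (X a - X t : MvPolynomial (Fin ℓ) K))
              * ((X a - X j) * Polynomial.eval (X a) q)) • pderiv a
        + ∑ a ∈ insert j Cp,
            (Polynomial.eval (X j) p : MvPolynomial (Fin ℓ) K)
              • (((∏ t ∈ T', (X a - X t : MvPolynomial (Fin ℓ) K))) • pderiv a) :=
        Finset.sum_add_distrib
    _ = _ := by
        rw [add_comm]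
        congr 1
        rw [Finset.sum_insert hjC]
        have hzero : ((∏ t ∈ T', (X j - X t : MvPolynomial (Fin ℓ) K))
            * ((X j - X j) * Polynomial.eval (X j) q)) • (pderiv j :
              Derivation K (MvPolynomial (Fin ℓ) K) (MvPolynomial (Fin ℓ) K)) = 0 := by
          simp
        rw [hzero, zero_add]
        refine Finset.sum_congr rfl fun a _ => ?_
        congr 1
        have h1 : (∏ t ∈ (insert j T') \ Tp, (X a - X t : MvPolynomial (Fin ℓ) K))
            * ∏ t ∈ Tp, (X a - X t : MvPolynomial (Fin ℓ) K)
            = ∏ t ∈ insert j T', (X a - X t : MvPolynomial (Fin ℓ) K) := Finset.prod_sdiff hTp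
        have h2 : ∏ t ∈ insert j T', (X a - X t : MvPolynomial (Fin ℓ) K)
            = (X a - X j) * ∏ t ∈ T', (X a - X t : MvPolynomial (Fin ℓ) K) :=
          Finset.prod_insert hjT
        rw [Polynomial.eval_mul, Polynomial.eval_prod]
        simp only [Polynomial.eval_sub, Polynomial.eval_X, Polynomial.eval_C]
        linear_combination Polynomial.eval (X a) q * (h2.symm.trans h1.symm)

lemma chain_mem {G : SimpleGraph (Fin ℓ)} [DecidableRel G.Adj]
    (Θ : Set (Derivation K (MvPolynomial (Fin ℓ) K) (MvPolynomial (Fin ℓ) K)))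
    {c : ℕ} {v : Fin c → Fin ℓ} (hv : Function.Injective v)
    (hmem : ∀ i : Fin c, sepDer K ℓ (chainT G v i) (chainC v i) ∈ Θ) :
    ∀ (n : ℕ) (i : Fin c), i.val = n → ∀ p : Polynomial (MvPolynomial (Fin ℓ) K),
      sepDerP K ℓ (chainT G v i) (chainC v i) p
        ∈ Submodule.span (MvPolynomial (Fin ℓ) K) Θ := by
  intro n
  induction n with
  | zero =>
    intro i hi p
    have h0 : Finset.univ.filter (· ≤ i) = {i} := by
      ext j
      simp only [Finset.mem_filter, Finset.mem_univ, true_and, Finset.mem_singleton,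
        Fin.le_def, Fin.ext_iff, hi]
      omega
    have hC : chainC v i = {v i} := by rw [chainC, h0, Finset.image_singleton]
    have key : sepDerP K ℓ (chainT G v i) (chainC v i) p
        = (Polynomial.eval (X (v i)) p) • sepDer K ℓ (chainT G v i) (chainC v i) := by
      rw [hC]
      unfold sepDerP sepDer
      rw [Finset.sum_singleton, Finset.sum_singleton, smul_smul]
      congr 1
      ring
    rw [key]
    exact Submodule.smul_mem _ _ (Submodule.subset_span (hmem i))
  | succ n ih =>
    intro i hi p
    have hn : n < c := by omega
    set ip : Fin c := ⟨n, hn⟩ with hip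
    have hfilter : Finset.univ.filter (· ≤ i) = insert i (Finset.univ.filter (· ≤ ip)) := by
      ext j
      simp only [Finset.mem_filter, Finset.mem_univ, true_and, Finset.mem_insert,
        Fin.le_def, Fin.ext_iff, hi, hip, Fin.val_mk]
      omega
    have hC : chainC v i = insert (v i) (chainC v ip) := by
      rw [chainC, hfilter, Finset.image_insert]
      rfl
    have hjC : v i ∉ chainC v ip := by
      rw [chainC]
      simp only [Finset.mem_image, Finset.mem_filter, Finset.mem_univ, true_and, not_exists]
      rintro j ⟨hj, hvj⟩
      have hji : j = i := hv hvj
      subst hji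
      rw [Fin.le_def] at hj
      have hj' : (j : ℕ) ≤ n := hj
      omega
    have hiC : v i ∈ chainC v i := by
      rw [chainC]
      exact Finset.mem_image_of_mem v (by simp)
    have hjT : v i ∉ chainT G v i := by
      rw [chainT, Finset.mem_sdiff]
      rintro ⟨-, h⟩
      exact h hiC
    have hTp : chainT G v ip ⊆ insert (v i) (chainT G v i) := by
      intro t ht
      rw [chainT, Finset.mem_sdiff] at ht
      obtain ⟨hbi, hnC⟩ := ht
      by_cases hne : t = v i
      · exact hne ▸ Finset.mem_insert_self _ _
      · refine Finset.mem_insert_of_mem ?_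
        rw [chainT, Finset.mem_sdiff]
        constructor
        · rw [Finset.mem_biUnion] at hbi ⊢
          obtain ⟨j, hj, hadj⟩ := hbi
          refine ⟨j, ?_, hadj⟩
          simp only [Finset.mem_filter, Finset.mem_univ, true_and, Fin.le_def] at hj ⊢
          have hj' : (j : ℕ) ≤ n := hj
          omega
        · rw [hC, Finset.mem_insert]
          push_neg
          exact ⟨hne, hnC⟩
    rw [hC, sepDerP_step K (chainT G v i) (chainT G v ip) (chainC v ip) (v i) hjC hjT hTp p]
    refine Submodule.add_mem _ ?_ (ih ip rfl _)
    rw [← hC]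
    exact Submodule.smul_mem _ _ (Submodule.subset_span (hmem i))

end AlgAux

theorem stmt8 (K : Type*) [Field K] (ℓ : ℕ) (G : SimpleGraph (Fin ℓ)) [DecidableRel G.Adj]
    (hG : G.Connected) (hnc : G ≠ ⊤) (k : ℕ)
    (hκ₁ : IsKConnected G (k + 1)) (hκ₂ : ¬ IsKConnected G (k + 2))
    (Θ : Set (Derivation K (MvPolynomial (Fin ℓ) K) (MvPolynomial (Fin ℓ) K)))
    (hθ : ∀ i ≤ k, theta K ℓ i ∈ Θ)
    (hchain : ∀ T C : Finset (Fin ℓ), IsMinimalSeparator G T → IsCompOf G T C →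
      HasDescendingChain K ℓ G Θ T C) :
    ∀ i, k < i → theta K ℓ i ∈ Submodule.span (MvPolynomial (Fin ℓ) K) Θ := by
  intro m hm
  classical
  obtain ⟨T, hTcard, hTmin⟩ := exists_min_sep hnc hκ₁ hκ₂
  set f : Polynomial (MvPolynomial (Fin ℓ) K)
    := ∏ t ∈ T, (Polynomial.X - Polynomial.C (X t)) with hf
  have hfm : f.Monic :=
    Polynomial.monic_prod_of_monic _ _ fun t _ => Polynomial.monic_X_sub_C _
  set q := (Polynomial.X ^ m : Polynomial (MvPolynomial (Fin ℓ) K)) /ₘ f with hqdef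
  set r := (Polynomial.X ^ m : Polynomial (MvPolynomial (Fin ℓ) K)) %ₘ f with hrdef
  have hfdeg : f.natDegree = k + 1 := by
    rw [hf, Polynomial.natDegree_prod_of_monic _ _ (fun t _ => Polynomial.monic_X_sub_C _)]
    simp [Polynomial.natDegree_X_sub_C, hTcard]
  have hrdeg : r.natDegree < k + 1 := by
    by_cases h0 : r = 0
    · simp [h0]
    · have hdf : f.degree = ((k + 1 : ℕ) : WithBot ℕ) := by
        rw [Polynomial.degree_eq_natDegree hfm.ne_zero, hfdeg]
      have h1 : r.degree < ((k + 1 : ℕ) : WithBot ℕ) := by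
        rw [← hdf, hrdef]
        exact Polynomial.degree_modByMonic_lt _ hfm
      exact (Polynomial.natDegree_lt_iff_degree_lt h0).mpr h1
  have heval : ∀ a : Fin ℓ, (X a : MvPolynomial (Fin ℓ) K) ^ m
      = Polynomial.eval (X a) f * Polynomial.eval (X a) q + Polynomial.eval (X a) r := by
    intro a
    have h1 := congrArg (Polynomial.eval (X a))
      (Polynomial.modByMonic_add_div (Polynomial.X ^ m : Polynomial (MvPolynomial (Fin ℓ) K)) f)
    simp only [Polynomial.eval_add, Polynomial.eval_mul, Polynomial.eval_pow,
      Polynomial.eval_X, ← hqdef, ← hrdef] at h1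
    rw [← h1]
    ring
  have hfeval : ∀ a : Fin ℓ,
      Polynomial.eval (X a) f = ∏ t ∈ T, (X a - X t : MvPolynomial (Fin ℓ) K) := by
    intro a
    rw [hf, Polynomial.eval_prod]
    simp [Polynomial.eval_sub]
  have hfT : ∀ t ∈ T, (∏ s ∈ T, (X t - X s : MvPolynomial (Fin ℓ) K)) = 0 := fun t ht =>
    Finset.prod_eq_zero ht (by simp)
  set 𝒞 : Finset (Finset (Fin ℓ)) := (Finset.univ \ T).image (gcomp G T) with h𝒞
  have hmem𝒞 : ∀ C ∈ 𝒞, ∃ w, w ∉ T ∧ C = gcomp G T w := by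
    intro C hC
    rw [h𝒞, Finset.mem_image] at hC
    obtain ⟨w, hw, rfl⟩ := hC
    exact ⟨w, (Finset.mem_sdiff.mp hw).2, rfl⟩
  have hdisj : (↑𝒞 : Set (Finset (Fin ℓ))).PairwiseDisjoint id := by
    intro C hC C' hC' hne
    obtain ⟨w, hw, rfl⟩ := hmem𝒞 C (Finset.mem_coe.mp hC)
    obtain ⟨w', hw', rfl⟩ := hmem𝒞 C' (Finset.mem_coe.mp hC')
    simp only [Function.onFun, id]
    rw [Finset.disjoint_left]
    intro x hx hx'
    exact hne (by rw [← gcomp_eq_of_mem hx, gcomp_eq_of_mem hx'])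
  have hbi : 𝒞.biUnion id = Finset.univ \ T := by
    ext u
    simp only [Finset.mem_biUnion, id, h𝒞, Finset.mem_image, Finset.mem_sdiff,
      Finset.mem_univ, true_and]
    constructor
    · rintro ⟨C, ⟨w, hw, rfl⟩, hu⟩
      exact (mem_gcomp.mp hu).notMem_right
    · intro hu
      exact ⟨gcomp G T u, ⟨u, hu, rfl⟩, mem_gcomp.mpr (AvoidReach.rfl hu)⟩
  have hcompmem : ∀ C ∈ 𝒞, sepDerP K ℓ T C q ∈ Submodule.span (MvPolynomial (Fin ℓ) K) Θ := by
    intro C hC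
    obtain ⟨w, hwT, rfl⟩ := hmem𝒞 C hC
    have hcomp : IsCompOf G T (gcomp G T w) := isCompOf_gcomp hwT
    obtain ⟨v, hvinj, hvimg, hvmem⟩ := hchain T _ hTmin hcomp
    have hcpos : 0 < (gcomp G T w).card := Finset.card_pos.mpr hcomp.2.1
    set last : Fin (gcomp G T w).card := ⟨(gcomp G T w).card - 1, by omega⟩ with hlast
    have hfl : Finset.univ.filter (· ≤ last) = Finset.univ := by
      ext j
      simp only [Finset.mem_filter, Finset.mem_univ, true_and, iff_true, Fin.le_def, hlast]
      have := j.isLt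
      omega
    have hClast : chainC v last = gcomp G T w := by rw [chainC, hfl, hvimg]
    have hTlast : chainT G v last ⊆ T := by
      intro t ht
      rw [chainT, Finset.mem_sdiff, Finset.mem_biUnion] at ht
      obtain ⟨⟨j, hj, hadj⟩, htC⟩ := ht
      rw [hClast] at htC
      rw [SimpleGraph.mem_neighborFinset] at hadj
      by_contra htT
      have hvj : v j ∈ gcomp G T w := by
        rw [← hvimg]
        exact Finset.mem_image_of_mem v (Finset.mem_univ j)
      exact hcomp.2.2.2 (v j) hvj t htC htT hadj
    have hmain := chain_mem K Θ hvinj hvmem last.val last rfl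
      ((∏ t ∈ T \ chainT G v last, (Polynomial.X - Polynomial.C (X t))) * q)
    rw [hClast] at hmain
    rw [sepDerP_subset K hTlast (gcomp G T w) q]
    exact hmain
  have hsum2 : ∑ j ∈ Finset.range (k + 1), r.coeff j • theta K ℓ j
      = ∑ a : Fin ℓ, (Polynomial.eval (X a) r)
          • (pderiv a : Derivation K (MvPolynomial (Fin ℓ) K) (MvPolynomial (Fin ℓ) K)) := by
    unfold theta
    simp only [Finset.smul_sum, smul_smul]
    rw [Finset.sum_comm]
    refine Finset.sum_congr rfl fun a _ => ?_
    rw [← Finset.sum_smul]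
    congr 1
    exact (Polynomial.eval_eq_sum_range' hrdeg (X a)).symm
  have key : theta K ℓ m
      = ∑ j ∈ Finset.range (k + 1), r.coeff j • theta K ℓ j
        + ∑ a : Fin ℓ,
            ((∏ t ∈ T, (X a - X t : MvPolynomial (Fin ℓ) K)) * Polynomial.eval (X a) q)
              • (pderiv a : Derivation K (MvPolynomial (Fin ℓ) K) (MvPolynomial (Fin ℓ) K)) := by
    rw [hsum2]
    unfold theta
    rw [← Finset.sum_add_distrib]
    refine Finset.sum_congr rfl fun a _ => ?_
    rw [← add_smul]
    congr 1
    rw [heval a, hfeval a]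
    ring
  have h1 := Finset.sum_biUnion (s := 𝒞) (t := id)
    (f := fun a => ((∏ t ∈ T, (X a - X t : MvPolynomial (Fin ℓ) K)) * Polynomial.eval (X a) q)
      • (pderiv a : Derivation K (MvPolynomial (Fin ℓ) K) (MvPolynomial (Fin ℓ) K))) hdisj
  rw [hbi] at h1
  have huniv : ∑ C ∈ 𝒞, sepDerP K ℓ T C q
      = ∑ a : Fin ℓ,
          ((∏ t ∈ T, (X a - X t : MvPolynomial (Fin ℓ) K)) * Polynomial.eval (X a) q)
            • (pderiv a : Derivation K (MvPolynomial (Fin ℓ) K) (MvPolynomial (Fin ℓ) K)) := by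
    unfold sepDerP
    simp only [id] at h1
    rw [← h1]
    refine Finset.sum_subset (Finset.sdiff_subset) fun a _ ha => ?_
    have haT : a ∈ T := by
      by_contra haT
      exact ha (Finset.mem_sdiff.mpr ⟨Finset.mem_univ a, haT⟩)
    rw [hfT a haT, zero_mul, zero_smul]
  rw [key, ← huniv]
  refine Submodule.add_mem _ ?_ (Submodule.sum_mem _ fun C hC => hcompmem C hC)
  refine Submodule.sum_mem _ fun j hj => Submodule.smul_mem _ _ (Submodule.subset_span ?_)
  exact hθ j (by have := Finset.mem_range.mp hj; omega)
end
end

section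
/- Let 𝒯 be a tree on vertex set {1,…,n} with n ≥ 3, let v_0 be a vertex of 𝒯 with deg(v_0) ≥ 2, and set T_0 = {v_0}. For each vertex v ≠ v_0 with deg(v) ≥ 2 (i.e., each minimal separator {v} ≠ T_0 of 𝒯), let C_0^{{v}} denote the connected component of 𝒯 ∖ {v} containing v_0. Then the set Θ_𝒯 = {θ_0} ∪ {θ_C^{T_0} : C a connected component of 𝒯 ∖ T_0} ∪ ⋃_{v ≠ v_0, deg(v) ≥ 2} {θ_C^{{v}} : C a connected component of 𝒯 ∖ {v}, C ≠ C_0^{{v}}} is a basis of the S-module D(A(𝒯)); in particular D(A(𝒯)) is a free S-module. -/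
open MvPolynomial

noncomputable section

/-- The generating set `Θ_𝒯` of a tree `𝒯`: `θ_0`, together with the derivations
`θ_C^{T_0}` for all components `C` of `𝒯 ∖ {v₀}`, together with, for every other
minimal separator `{v}` (`v ≠ v₀`, `deg v ≥ 2`), the derivations `θ_C^{{v}}` for the
components `C` of `𝒯 ∖ {v}` not containing `v₀`. -/
def treeGens (K : Type*) [Field K] (n : ℕ) (G : SimpleGraph (Fin n)) (v₀ : Fin n) :
    Set (Derivation K (MvPolynomial (Fin n) K) (MvPolynomial (Fin n) K)) :=
  {theta K n 0} ∪
  {θ | ∃ C : Finset (Fin n), IsCompOf G {v₀} C ∧ θ = sepDer K n {v₀} C} ∪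
  {θ | ∃ (v : Fin n) (C : Finset (Fin n)), v ≠ v₀ ∧ 2 ≤ (G.neighborSet v).ncard ∧
    IsCompOf G {v} C ∧ v₀ ∉ C ∧ θ = sepDer K n {v} C}

section GraphAux
open SimpleGraph
namespace TreeAux
variable {n : ℕ}

lemma dist_add_dist_le_of_mem_support {G : SimpleGraph (Fin n)} {a b z : Fin n}
    (p : G.Walk a b) (hz : z ∈ p.support) :
    G.dist a z + G.dist z b ≤ p.length := by
  have h : (p.takeUntil z hz).append (p.dropUntil z hz) = p := p.take_spec hz
  have hlen : (p.takeUntil z hz).length + (p.dropUntil z hz).length = p.length := by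
    rw [← Walk.length_append, h]
  calc G.dist a z + G.dist z b ≤ (p.takeUntil z hz).length + (p.dropUntil z hz).length :=
        add_le_add (dist_le _) (dist_le _)
    _ = p.length := hlen

lemma path_length_eq_dist {G : SimpleGraph (Fin n)} (hac : G.IsAcyclic) {a b : Fin n}
    (p : G.Walk a b) (hp : p.IsPath) : p.length = G.dist a b := by
  obtain ⟨q, hq, hql⟩ := (Walk.reachable p).exists_path_of_dist
  have h := hac.path_unique ⟨p, hp⟩ ⟨q, hq⟩
  rw [← hql]
  exact congrArg Walk.length (congrArg Subtype.val h)

open Classical in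
/-- The parent of `u`: a neighbor strictly closer to `v₀`. -/
def parent (G : SimpleGraph (Fin n)) (v₀ u : Fin n) : Fin n :=
  if h : ∃ z, G.Adj u z ∧ G.dist z v₀ + 1 = G.dist u v₀ then h.choose else v₀

lemma exists_parent {G : SimpleGraph (Fin n)} (hG : G.Connected) {v₀ u : Fin n} (hu : u ≠ v₀) :
    ∃ z, G.Adj u z ∧ G.dist z v₀ + 1 = G.dist u v₀ := by
  obtain ⟨p, hp⟩ := hG.exists_walk_length_eq_dist u v₀
  have hpos : 0 < G.dist u v₀ := hG.pos_dist_of_ne hu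
  cases p with
  | nil => simp at hp; omega
  | cons h q =>
    rename_i z
    refine ⟨z, h, ?_⟩
    have h1 : G.dist z v₀ ≤ q.length := dist_le q
    have h2 : q.length + 1 = G.dist u v₀ := by simpa [Walk.length_cons] using hp
    have h3 : G.dist u v₀ ≤ G.dist u z + G.dist z v₀ := hG.dist_triangle
    have h4 : G.dist u z ≤ 1 := by
      have := dist_le (Walk.cons h Walk.nil)
      simpa using this
    omega

lemma parent_spec {G : SimpleGraph (Fin n)} (hG : G.Connected) {v₀ u : Fin n} (hu : u ≠ v₀) :
    G.Adj u (parent G v₀ u) ∧ G.dist (parent G v₀ u) v₀ + 1 = G.dist u v₀ := by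
  classical
  rw [parent]
  rw [dif_pos (exists_parent hG hu)]
  exact (exists_parent hG hu).choose_spec

lemma parent_adj {G : SimpleGraph (Fin n)} (hG : G.Connected) {v₀ u : Fin n} (hu : u ≠ v₀) :
    G.Adj u (parent G v₀ u) := (parent_spec hG hu).1

lemma parent_dist {G : SimpleGraph (Fin n)} (hG : G.Connected) {v₀ u : Fin n} (hu : u ≠ v₀) :
    G.dist (parent G v₀ u) v₀ + 1 = G.dist u v₀ := (parent_spec hG hu).2

/-- every walk from `u` to `v₀` goes through the parent of `u`. -/
lemma hits_parent {G : SimpleGraph (Fin n)} (hG : G.Connected) (hac : G.IsAcyclic)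
    {v₀ u : Fin n} (hu : u ≠ v₀) (W : G.Walk u v₀) : parent G v₀ u ∈ W.support := by
  set p := parent G v₀ u with hp
  by_contra hmem
  -- shortest path from p to v₀
  obtain ⟨q, hqp, hql⟩ := (hG.preconnected p v₀).exists_path_of_dist
  have hunotq : u ∉ q.support := by
    intro hus
    have h1 := dist_add_dist_le_of_mem_support q hus
    rw [hql] at h1
    have h2 : G.dist p v₀ + 1 = G.dist u v₀ := parent_dist hG hu
    have h3 : 0 < G.dist p u := hG.pos_dist_of_ne (fun h => (parent_adj hG hu).ne' h)
    omega
  have hP1 : (Walk.cons (parent_adj hG hu) q).IsPath := hqp.cons hunotq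
  have hP2 : W.bypass.IsPath := W.bypass_isPath
  have := hac.path_unique ⟨Walk.cons (parent_adj hG hu) q, hP1⟩ ⟨W.bypass, hP2⟩
  have hpsup : p ∈ (Walk.cons (parent_adj hG hu) q).support := by
    rw [Walk.support_cons]; exact List.mem_cons_of_mem _ q.start_mem_support
  have hval : Walk.cons (parent_adj hG hu) q = W.bypass := congrArg Subtype.val this
  rw [hval] at hpsup
  exact hmem (W.support_bypass_subset hpsup)

end TreeAux

namespace TreeAux2
open TreeAux
variable {n : ℕ}

/-- vertices reachable from `u` avoiding the parent of `u`. -/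
def cset (G : SimpleGraph (Fin n)) (v₀ u : Fin n) : Set (Fin n) :=
  {w | ∃ W : G.Walk u w, parent G v₀ u ∉ W.support}

def cfin (G : SimpleGraph (Fin n)) (v₀ u : Fin n) : Finset (Fin n) :=
  (Set.toFinite (cset G v₀ u)).toFinset

lemma mem_cfin {G : SimpleGraph (Fin n)} {v₀ u w : Fin n} :
    w ∈ cfin G v₀ u ↔ w ∈ cset G v₀ u := Set.Finite.mem_toFinset _

lemma coe_cfin {G : SimpleGraph (Fin n)} {v₀ u : Fin n} :
    (cfin G v₀ u : Set (Fin n)) = cset G v₀ u := Set.Finite.coe_toFinset _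

lemma self_mem_cset {G : SimpleGraph (Fin n)} (hG : G.Connected) {v₀ u : Fin n} (hu : u ≠ v₀) :
    u ∈ cset G v₀ u := by
  refine ⟨Walk.nil, ?_⟩
  simp only [Walk.support_nil, List.mem_singleton]
  exact (parent_adj hG hu).ne'

lemma ne_parent_of_mem_cset {G : SimpleGraph (Fin n)} {v₀ u w : Fin n}
    (hw : w ∈ cset G v₀ u) : w ≠ parent G v₀ u := by
  obtain ⟨W, hW⟩ := hw
  exact fun h => hW (h ▸ W.end_mem_support)

lemma v₀_not_mem_cset {G : SimpleGraph (Fin n)} (hG : G.Connected) (hac : G.IsAcyclic)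
    {v₀ u : Fin n} (hu : u ≠ v₀) : v₀ ∉ cset G v₀ u := by
  rintro ⟨W, hW⟩
  exact hW (hits_parent hG hac hu W)

lemma cset_closed {G : SimpleGraph (Fin n)} {v₀ u w z : Fin n}
    (hw : w ∈ cset G v₀ u) (hadj : G.Adj w z) (hz : z ≠ parent G v₀ u) :
    z ∈ cset G v₀ u := by
  obtain ⟨W, hW⟩ := hw
  refine ⟨W.concat hadj, ?_⟩
  rw [Walk.support_concat]
  intro hmem
  rcases List.mem_append.mp hmem with h | h
  · exact hW h
  · exact hz (List.mem_singleton.mp h ▸ rfl)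

lemma mem_cset_of_mem_support {G : SimpleGraph (Fin n)} {v₀ u w z : Fin n}
    (W : G.Walk u w) (hW : parent G v₀ u ∉ W.support) (hz : z ∈ W.support) :
    z ∈ cset G v₀ u :=
  ⟨W.takeUntil z hz, fun hps => hW (W.support_takeUntil_subset hz hps)⟩

/-- a path from `u` to `v₀` meeting `cset` only in `u`. -/
lemma exists_path_to_v₀ {G : SimpleGraph (Fin n)} (hG : G.Connected) (hac : G.IsAcyclic)
    {v₀ u : Fin n} (hu : u ≠ v₀) :
    ∃ P : G.Walk u v₀, P.IsPath ∧ P.length = G.dist u v₀ ∧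
      ∀ z ∈ P.support, z ≠ u → z ∉ cset G v₀ u := by
  set p := parent G v₀ u with hpdef
  obtain ⟨q, hqp, hql⟩ := (hG.preconnected p v₀).exists_path_of_dist
  have hunotq : u ∉ q.support := by
    intro hus
    have h1 := dist_add_dist_le_of_mem_support q hus
    rw [hql] at h1
    have h2 : G.dist p v₀ + 1 = G.dist u v₀ := parent_dist hG hu
    have h3 : 0 < G.dist p u := hG.pos_dist_of_ne (fun h => (parent_adj hG hu).ne' h)
    omega
  refine ⟨Walk.cons (parent_adj hG hu) q, hqp.cons hunotq, ?_, ?_⟩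
  · rw [Walk.length_cons, hql, parent_dist hG hu]
  · intro z hz hzu hzc
    rw [Walk.support_cons, List.mem_cons] at hz
    rcases hz with h | hzq
    · exact hzu h
    -- z on shortest path q from p to v₀, and z ∈ cset: contradiction
    have hzp : z ≠ p := ne_parent_of_mem_cset hzc
    obtain ⟨A, hA⟩ := hzc
    -- p not in the support of q.dropUntil z
    have hpdrop : p ∉ (q.dropUntil z hzq).support := by
      intro hpd
      have hnodup : ((q.takeUntil z hzq).support ++ (q.dropUntil z hzq).support.tail).Nodup := by
        rw [← Walk.support_append, Walk.take_spec]
        exact hqp.support_nodup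
      have hdisj := List.disjoint_of_nodup_append hnodup
      have hp1 : p ∈ (q.takeUntil z hzq).support := Walk.start_mem_support _
      have hp2 : p ∈ (q.dropUntil z hzq).support.tail := by
        have := (q.dropUntil z hzq).support_eq_cons
        rw [this] at hpd
        rcases List.mem_cons.mp hpd with h | h
        · exact absurd h.symm hzp
        · exact h
      exact hdisj hp1 hp2
    have : p ∉ (A.append (q.dropUntil z hzq)).support := by
      rw [Walk.support_append]
      intro hmem
      rcases List.mem_append.mp hmem with h | h
      · exact hA h
      · exact hpdrop (List.mem_of_mem_tail h)
    exact this (hits_parent hG hac hu _)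

lemma dist_lt_of_mem_cset {G : SimpleGraph (Fin n)} (hG : G.Connected) (hac : G.IsAcyclic)
    {v₀ u w : Fin n} (hu : u ≠ v₀) (hw : w ∈ cset G v₀ u) (hwu : w ≠ u) :
    G.dist u v₀ < G.dist w v₀ := by
  obtain ⟨W, hW⟩ := hw
  set Q := W.bypass with hQdef
  have hQp : Q.IsPath := W.bypass_isPath
  have hQs : ∀ z ∈ Q.support, z ∈ cset G v₀ u := fun z hz =>
    mem_cset_of_mem_support W hW (W.support_bypass_subset hz)
  obtain ⟨P, hPp, hPl, hPc⟩ := exists_path_to_v₀ hG hac hu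
  have hR : (P.reverse.append Q).IsPath := by
    rw [Walk.isPath_def, Walk.support_append]
    refine List.Nodup.append ?_ ?_ ?_
    · rw [Walk.support_reverse]; exact List.nodup_reverse.mpr hPp.support_nodup
    · exact hQp.support_nodup.sublist (List.tail_sublist _)
    · intro z hz1 hz2
      rw [Walk.support_reverse, List.mem_reverse] at hz1
      have hzc : z ∈ cset G v₀ u := hQs z (List.mem_of_mem_tail hz2)
      have hzu : z = u := by
        by_contra hne
        exact hPc z hz1 hne hzc
      subst hzu
      have : Q.support = z :: Q.support.tail := Q.support_eq_cons
      have hnodup := hQp.support_nodup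
      rw [this] at hnodup
      exact (List.nodup_cons.mp hnodup).1 hz2
  have hlen := path_length_eq_dist hac _ hR
  rw [Walk.length_append, Walk.length_reverse, hPl] at hlen
  have hQpos : 0 < Q.length := by
    rcases Nat.eq_zero_or_pos Q.length with h | h
    · exact absurd (Walk.eq_of_length_eq_zero h) (Ne.symm hwu)
    · exact h
  have hcomm : G.dist v₀ w = G.dist w v₀ := SimpleGraph.dist_comm
  omega

end TreeAux2

namespace TreeAux3
open TreeAux TreeAux2

variable {n : ℕ}

lemma reachable_induce_of_walk {G : SimpleGraph (Fin n)} (s : Set (Fin n)) {a b : Fin n}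
    (W : G.Walk a b) :
    (∀ z ∈ W.support, z ∈ s) → ∀ (ha : a ∈ s) (hb : b ∈ s),
      (G.induce s).Reachable ⟨a, ha⟩ ⟨b, hb⟩ := by
  induction W with
  | nil => intro _ ha hb; exact Reachable.refl _
  | @cons x y c h q ih =>
    intro hs ha hb
    have hy : y ∈ s := hs y (by simp)
    have hadj : (G.induce s).Adj ⟨x, ha⟩ ⟨y, hy⟩ := h
    exact hadj.reachable.trans (ih (fun z hz => hs z (by simp [hz])) hy hb)

lemma isCompOf_cfin {G : SimpleGraph (Fin n)} (hG : G.Connected) (hac : G.IsAcyclic)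
    {v₀ u : Fin n} (hu : u ≠ v₀) :
    IsCompOf G {parent G v₀ u} (cfin G v₀ u) := by
  refine ⟨?_, ⟨u, mem_cfin.mpr (self_mem_cset hG hu)⟩, ?_, ?_⟩
  · intro v hv
    simp only [Finset.mem_singleton]
    exact ne_parent_of_mem_cset (mem_cfin.mp hv)
  · rw [coe_cfin, connected_iff]
    refine ⟨?_, ⟨⟨u, self_mem_cset hG hu⟩⟩⟩
    rintro ⟨x, hx⟩ ⟨y, hy⟩
    obtain ⟨Wx, hWx⟩ := id hx
    obtain ⟨Wy, hWy⟩ := id hy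
    have h1 := reachable_induce_of_walk (cset G v₀ u) Wx
      (fun z hz => mem_cset_of_mem_support Wx hWx hz) (self_mem_cset hG hu) hx
    have h2 := reachable_induce_of_walk (cset G v₀ u) Wy
      (fun z hz => mem_cset_of_mem_support Wy hWy hz) (self_mem_cset hG hu) hy
    exact h1.symm.trans h2
  · intro v hv w hw hwt hadj
    rw [Finset.mem_singleton] at hwt
    exact hw (mem_cfin.mpr (cset_closed (mem_cfin.mp hv) hadj hwt))

/-- crossing lemma: a walk from inside `C` to outside contains an exit edge. -/
lemma exists_crossing {G : SimpleGraph (Fin n)} (C : Finset (Fin n)) {a b : Fin n}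
    (W : G.Walk a b) (ha : a ∈ C) (hb : b ∉ C) :
    ∃ x y, x ∈ C ∧ y ∉ C ∧ G.Adj x y ∧ y ∈ W.support := by
  induction W with
  | nil => exact absurd ha hb
  | @cons x y c h q ih =>
    by_cases hy : y ∈ C
    · obtain ⟨x', y', h1, h2, h3, h4⟩ := ih hy hb
      exact ⟨x', y', h1, h2, h3, by simp [h4]⟩
    · exact ⟨x, y, ha, hy, h, by simp⟩

/-- in the situation of interest, every walk from `u ∈ C` to `v₀` meets `v`. -/
lemma hits_v {G : SimpleGraph (Fin n)} {v v₀ u : Fin n} {C : Finset (Fin n)}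
    (hcomp : IsCompOf G {v} C) (hC : v = v₀ ∨ v₀ ∉ C) (hu : u ∈ C)
    (W : G.Walk u v₀) : v ∈ W.support := by
  rcases hC with h | h
  · exact h ▸ W.end_mem_support
  · obtain ⟨x, y, h1, h2, h3, h4⟩ := exists_crossing C W hu h
    have : y = v := by
      by_contra hne
      exact hcomp.2.2.2 x h1 y h2 (by simpa using hne) h3
    exact this ▸ h4

lemma mem_of_walk_avoid {G : SimpleGraph (Fin n)} {v : Fin n} {C : Finset (Fin n)}
    (hcl : ∀ x ∈ C, ∀ w : Fin n, w ∉ C → w ∉ ({v} : Finset (Fin n)) → ¬ G.Adj x w)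
    {a b : Fin n} (W : G.Walk a b) (ha : a ∈ C) (hs : v ∉ W.support) : b ∈ C := by
  induction W with
  | nil => exact ha
  | @cons x c b h q ih =>
    rw [Walk.support_cons, List.mem_cons] at hs
    push_neg at hs
    have hcC : c ∈ C := by
      by_contra hcc
      have hcv : c ∉ ({v} : Finset (Fin n)) := by
        simp only [Finset.mem_singleton]
        intro he
        exact hs.2 (he ▸ q.start_mem_support)
      exact hcl x ha c hcc hcv h
    exact ih hcC hs.2

/-- the classification: a component w.r.t. a single vertex `v` on the far side from `v₀`
is `cfin G v₀ u` for a neighbor `u` of `v` with `parent u = v`. -/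
lemma classify {G : SimpleGraph (Fin n)} (hG : G.Connected) (hac : G.IsAcyclic)
    {v v₀ : Fin n} {C : Finset (Fin n)}
    (hcomp : IsCompOf G {v} C) (hC : v = v₀ ∨ v₀ ∉ C) :
    ∃ u, u ≠ v₀ ∧ parent G v₀ u = v ∧ C = cfin G v₀ u := by
  classical
  obtain ⟨w, hw⟩ := hcomp.2.1
  have hvC : v ∉ C := fun h => (hcomp.1 v h) (Finset.mem_singleton_self v)
  -- find u ∈ C adjacent to v
  obtain ⟨W0⟩ := hG.preconnected w v
  obtain ⟨x, y, h1, h2, h3, h4⟩ := exists_crossing C W0 hw hvC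
  have hyv : y = v := by
    by_contra hne
    exact hcomp.2.2.2 x h1 y h2 (by simpa using hne) h3
  subst hyv
  set u := x with hudef
  have huC : u ∈ C := h1
  have huv : G.Adj u y := h3
  have huv₀ : u ≠ v₀ := by
    rcases hC with h | h
    · exact fun he => (G.ne_of_adj huv) (he.trans h.symm)
    · exact fun he => h (he ▸ huC)
  have hpv : parent G v₀ u = y := by
    set p := parent G v₀ u with hpdef
    obtain ⟨Pv, hPvp, hPvl⟩ := (hG.preconnected y v₀).exists_path_of_dist
    obtain ⟨Pp, hPpp, hPpl⟩ := (hG.preconnected p v₀).exists_path_of_dist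
    have h1 : p ∈ (Walk.cons huv Pv).support := hits_parent hG hac huv₀ _
    have h2 : y ∈ (Walk.cons (parent_adj hG huv₀) Pp).support := hits_v hcomp hC huC _
    rw [Walk.support_cons, List.mem_cons] at h1 h2
    have hpu : p ≠ u := (parent_adj hG huv₀).ne'
    have hyu : y ≠ u := huv.ne'
    have h1' : p ∈ Pv.support := h1.resolve_left hpu
    have h2' : y ∈ Pp.support := h2.resolve_left hyu
    have i1 := dist_add_dist_le_of_mem_support Pv h1'
    have i2 := dist_add_dist_le_of_mem_support Pp h2'
    rw [hPvl] at i1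
    rw [hPpl] at i2
    have hc1 : G.dist y p = G.dist p y := SimpleGraph.dist_comm
    have hzero : G.dist p y = 0 := by omega
    exact (hG.dist_eq_zero_iff).mp hzero
  refine ⟨u, huv₀, hpv, ?_⟩
  ext w
  rw [mem_cfin]
  constructor
  · intro hwC
    obtain ⟨Wi⟩ := hcomp.2.2.1.preconnected ⟨u, huC⟩ ⟨w, hwC⟩
    refine ⟨Wi.map (SimpleGraph.Embedding.induce (C : Set (Fin n))).toHom, ?_⟩
    show parent G v₀ u ∉ (Wi.map (SimpleGraph.Embedding.induce (C : Set (Fin n))).toHom).support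
    rw [Walk.support_map]
    intro hmem
    obtain ⟨z, hz, hzval⟩ := List.mem_map.mp hmem
    rw [hpv] at hzval
    refine hvC ?_
    rw [← hzval]
    exact Finset.mem_coe.mp z.2
  · rintro ⟨W, hW⟩
    rw [hpv] at hW
    exact mem_of_walk_avoid hcomp.2.2.2 W huC hW


end TreeAux3

namespace TreeAux4
open TreeAux TreeAux2 TreeAux3
variable {n : ℕ}

lemma deg2_parent {G : SimpleGraph (Fin n)} (hG : G.Connected) {v₀ u : Fin n}
    (hu : u ≠ v₀) (hp : parent G v₀ u ≠ v₀) :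
    2 ≤ (G.neighborSet (parent G v₀ u)).ncard := by
  set p := parent G v₀ u with hpdef
  have h1 : u ∈ G.neighborSet p := (parent_adj hG hu).symm
  have h2 : parent G v₀ p ∈ G.neighborSet p := parent_adj hG hp
  have hne : u ≠ parent G v₀ p := by
    intro he
    have d1 : G.dist p v₀ + 1 = G.dist u v₀ := parent_dist hG hu
    have d2 : G.dist (parent G v₀ p) v₀ + 1 = G.dist p v₀ := parent_dist hG hp
    rw [← he] at d2
    omega
  have : 1 < (G.neighborSet p).ncard :=
    (Set.one_lt_ncard_iff (Set.toFinite _)).mpr ⟨u, parent G v₀ p, h1, h2, hne⟩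
  omega

end TreeAux4

end GraphAux

section AlgAux
open TreeAux TreeAux2 TreeAux3 TreeAux4

variable (K : Type*) [Field K] (n : ℕ)

/-- record the values of a derivation on the variables. -/
def coordsMap : Derivation K (MvPolynomial (Fin n) K) (MvPolynomial (Fin n) K)
    →ₗ[MvPolynomial (Fin n) K] (Fin n → MvPolynomial (Fin n) K) where
  toFun θ := fun i => θ (X i)
  map_add' θ η := by ext i; simp
  map_smul' c θ := by ext i; simp

lemma coordsMap_injective : Function.Injective (coordsMap K n) := by
  intro a b h
  exact derivation_ext (fun i => congrFun h i)

lemma der_sum_apply (C : Finset (Fin n))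
    (f : Fin n → Derivation K (MvPolynomial (Fin n) K) (MvPolynomial (Fin n) K))
    (x : MvPolynomial (Fin n) K) :
    (∑ i ∈ C, f i) x = ∑ i ∈ C, f i x := by
  induction C using Finset.cons_induction with
  | empty => simp
  | cons a s ha ih => rw [Finset.sum_cons, Finset.sum_cons, ← ih]; rfl

lemma sepDer_apply_X (T C : Finset (Fin n)) (j : Fin n) :
    sepDer K n T C (X j)
      = if j ∈ C then ∏ t ∈ T, (X j - X t : MvPolynomial (Fin n) K) else 0 := by
  classical
  rw [sepDer, der_sum_apply]
  by_cases hj : j ∈ C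
  · rw [if_pos hj, Finset.sum_eq_single_of_mem j hj]
    · simp [pderiv_X_self]
    · intro b _ hb
      simp [pderiv_X_of_ne (Ne.symm hb)]
  · rw [if_neg hj, Finset.sum_eq_zero]
    intro b hb
    have hne : j ≠ b := fun h => hj (h ▸ hb)
    simp [pderiv_X_of_ne hne]

lemma theta0_apply_X (j : Fin n) : theta K n 0 (X j) = 1 := by
  classical
  rw [theta, der_sum_apply, Finset.sum_eq_single_of_mem j (Finset.mem_univ j)]
  · simp [pderiv_X_self]
  · intro b _ hb
    simp [pderiv_X_of_ne (Ne.symm hb)]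

variable {n}

lemma mem_derModule_iff {G : SimpleGraph (Fin n)}
    {θ : Derivation K (MvPolynomial (Fin n) K) (MvPolynomial (Fin n) K)} :
    θ ∈ derModule K n G ↔ ∀ i j : Fin n, G.Adj i j →
      θ (X i - X j) ∈ Ideal.span {(X i - X j : MvPolynomial (Fin n) K)} := Iff.rfl

lemma theta0_mem_derModule (G : SimpleGraph (Fin n)) : theta K n 0 ∈ derModule K n G := by
  intro i j hij
  rw [(theta K n 0).map_sub, theta0_apply_X, theta0_apply_X, sub_self]
  exact Submodule.zero_mem _

lemma sepDer_mem_derModule {G : SimpleGraph (Fin n)} (v : Fin n) (C : Finset (Fin n))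
    (hdisj : ∀ w ∈ C, w ≠ v)
    (hcl : ∀ a ∈ C, ∀ b : Fin n, b ∉ C → b ≠ v → ¬ G.Adj a b) :
    sepDer K n {v} C ∈ derModule K n G := by
  intro i j hij
  rw [(sepDer K n {v} C).map_sub, sepDer_apply_X, sepDer_apply_X, Ideal.mem_span_singleton]
  by_cases hi : i ∈ C <;> by_cases hj : j ∈ C
  · rw [if_pos hi, if_pos hj]
    have : (∏ t ∈ {v}, (X i - X t : MvPolynomial (Fin n) K))
        - ∏ t ∈ {v}, (X j - X t) = X i - X j := by
      rw [Finset.prod_singleton, Finset.prod_singleton]; ring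
    rw [this]
  · have hjv : j = v := by
      by_contra h
      exact hcl i hi j hj h hij
    subst hjv
    rw [if_pos hi, if_neg hj, Finset.prod_singleton, sub_zero]
  · have hiv : i = v := by
      by_contra h
      exact hcl j hj i hi h hij.symm
    subst hiv
    rw [if_neg hi, if_pos hj, Finset.prod_singleton, zero_sub]
    exact ⟨1, by ring⟩
  · rw [if_neg hi, if_neg hj, sub_zero]
    exact dvd_zero _

/-- The indexed family of generators: `θ_0` at `v₀`, and `θ_{C_u}^{parent u}` at `u ≠ v₀`. -/
def rowF (G : SimpleGraph (Fin n)) (v₀ u : Fin n) :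
    Derivation K (MvPolynomial (Fin n) K) (MvPolynomial (Fin n) K) :=
  if u = v₀ then theta K n 0 else sepDer K n {parent G v₀ u} (cfin G v₀ u)

/-- ordering key: depth-major, index-minor. -/
def key (G : SimpleGraph (Fin n)) (v₀ u : Fin n) : ℕ := u.val + G.dist u v₀ * n

lemma key_inj {G : SimpleGraph (Fin n)} {v₀ u w : Fin n}
    (h : key G v₀ u = key G v₀ w) : u = w := by
  have h1 := congrArg (· % n) h
  simp only [key, Nat.add_mul_mod_self_right] at h1
  have hu : u.val % n = u.val := Nat.mod_eq_of_lt u.isLt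
  have hw : w.val % n = w.val := Nat.mod_eq_of_lt w.isLt
  rw [hu, hw] at h1
  exact Fin.ext h1

lemma key_lt_of_dist_lt {G : SimpleGraph (Fin n)} {v₀ u w : Fin n}
    (h : G.dist u v₀ < G.dist w v₀) : key G v₀ u < key G v₀ w := by
  have h1 : key G v₀ u < n + G.dist u v₀ * n := by
    exact Nat.add_lt_add_right u.isLt _
  have h2 : n + G.dist u v₀ * n = (G.dist u v₀ + 1) * n := by ring
  have h3 : (G.dist u v₀ + 1) * n ≤ G.dist w v₀ * n := Nat.mul_le_mul_right n h
  have h4 : G.dist w v₀ * n ≤ key G v₀ w := Nat.le_add_left _ _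
  omega

lemma key_v₀_lt {G : SimpleGraph (Fin n)} (hG : G.Connected) {v₀ u : Fin n} (hu : u ≠ v₀) :
    key G v₀ v₀ < key G v₀ u := by
  apply key_lt_of_dist_lt
  rw [SimpleGraph.dist_self]
  exact hG.pos_dist_of_ne hu

lemma key_parent_lt {G : SimpleGraph (Fin n)} (hG : G.Connected) {v₀ u : Fin n} (hu : u ≠ v₀) :
    key G v₀ (parent G v₀ u) < key G v₀ u := by
  apply key_lt_of_dist_lt
  have := parent_dist hG hu
  omega

lemma key_lt_of_mem_cfin {G : SimpleGraph (Fin n)} (hG : G.Connected) (hac : G.IsAcyclic)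
    {v₀ u w : Fin n} (hu : u ≠ v₀) (hw : w ∈ cfin G v₀ u) (hne : w ≠ u) :
    key G v₀ u < key G v₀ w :=
  key_lt_of_dist_lt (dist_lt_of_mem_cset hG hac hu (mem_cfin.mp hw) hne)

lemma key_lt_bound {G : SimpleGraph (Fin n)} (hG : G.Connected) (v₀ u : Fin n) :
    key G v₀ u < n * n := by
  obtain ⟨p, hp, hl⟩ := (hG.preconnected u v₀).exists_path_of_dist
  have hd : G.dist u v₀ < n := by
    have := hp.length_lt
    rw [hl] at this
    simpa using this
  have h1 : key G v₀ u < n + G.dist u v₀ * n := Nat.add_lt_add_right u.isLt _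
  have h2 : n + G.dist u v₀ * n = (G.dist u v₀ + 1) * n := by ring
  have h3 : (G.dist u v₀ + 1) * n ≤ n * n := Nat.mul_le_mul_right n hd
  omega

lemma rowF_apply_v₀ {G : SimpleGraph (Fin n)} (v₀ j : Fin n) :
    rowF K G v₀ v₀ (X j) = 1 := by
  rw [rowF, if_pos rfl, theta0_apply_X]

lemma rowF_apply_ne {G : SimpleGraph (Fin n)} {v₀ u : Fin n} (hu : u ≠ v₀) (j : Fin n) :
    rowF K G v₀ u (X j)
      = if j ∈ cfin G v₀ u then X j - X (parent G v₀ u) else 0 := by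
  rw [rowF, if_neg hu, sepDer_apply_X]
  by_cases hj : j ∈ cfin G v₀ u <;> simp [hj, Finset.prod_singleton]

lemma rowF_mem_derModule {G : SimpleGraph (Fin n)} (hG : G.Connected) (hac : G.IsAcyclic)
    (v₀ u : Fin n) : rowF K G v₀ u ∈ derModule K n G := by
  rw [rowF]
  by_cases hu : u = v₀
  · rw [if_pos hu]; exact theta0_mem_derModule K G
  · rw [if_neg hu]
    refine sepDer_mem_derModule K _ _ ?_ ?_
    · exact fun w hw => ne_parent_of_mem_cset (mem_cfin.mp hw)
    · intro a ha b hb hbp hadj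
      exact hb (mem_cfin.mpr (cset_closed (mem_cfin.mp ha) hadj hbp))

lemma X_sub_X_ne_zero {u p : Fin n} (h : u ≠ p) :
    (X u - X p : MvPolynomial (Fin n) K) ≠ 0 := by
  rw [sub_ne_zero]
  exact fun he => h (MvPolynomial.X_injective he)

lemma rowF_linearIndependent {G : SimpleGraph (Fin n)} (hG : G.Connected) (hac : G.IsAcyclic)
    (v₀ : Fin n) : LinearIndependent (MvPolynomial (Fin n) K) (rowF K G v₀) := by
  classical
  rw [Fintype.linearIndependent_iff]
  intro g hsum
  have hc : ∀ j : Fin n, ∑ u : Fin n, g u * (rowF K G v₀ u (X j)) = 0 := by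
    intro j
    have h1 : (∑ u : Fin n, g u • rowF K G v₀ u) (X j) = (0 :
        Derivation K (MvPolynomial (Fin n) K) (MvPolynomial (Fin n) K)) (X j) := by
      rw [hsum]
    rw [der_sum_apply] at h1
    simpa [Derivation.smul_apply, smul_eq_mul] using h1
  suffices H : ∀ k, ∀ i : Fin n, key G v₀ i = k → g i = 0 from fun i => H _ i rfl
  intro k
  induction k using Nat.strong_induction_on with
  | _ k ih =>
    intro i hkey
    have hcj := hc i
    rw [Finset.sum_eq_single i] at hcj
    · by_cases hi : i = v₀
      · subst hi
        rw [rowF_apply_v₀, mul_one] at hcj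
        exact hcj
      · rw [rowF_apply_ne K hi, if_pos (mem_cfin.mpr (self_mem_cset hG hi))] at hcj
        rcases mul_eq_zero.mp hcj with h | h
        · exact h
        · exact absurd h (X_sub_X_ne_zero K (parent_adj hG hi).ne)
    · intro u _ hui
      by_cases hu : u = v₀
      · subst hu
        have hiv : i ≠ u := fun h => hui h.symm
        have := key_v₀_lt hG hiv
        rw [hkey] at this
        rw [ih _ this u rfl, zero_mul]
      · rw [rowF_apply_ne K hu]
        by_cases hic : i ∈ cfin G v₀ u
        · have hiu : i ≠ u := fun h => hui h.symm
          have hlt := key_lt_of_mem_cfin hG hac hu hic hiu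
          rw [hkey] at hlt
          rw [ih _ hlt u rfl, zero_mul]
        · rw [if_neg hic, mul_zero]
    · intro h; exact absurd (Finset.mem_univ i) h

lemma span_rowF_ge {G : SimpleGraph (Fin n)} (hG : G.Connected) (hac : G.IsAcyclic)
    (v₀ : Fin n) :
    derModule K n G ≤ Submodule.span (MvPolynomial (Fin n) K) (Set.range (rowF K G v₀)) := by
  classical
  suffices H : ∀ m k : ℕ, n * n ≤ k + m → ∀ θ, θ ∈ derModule K n G →
      (∀ w : Fin n, key G v₀ w < k → θ (X w) = 0) →
      θ ∈ Submodule.span (MvPolynomial (Fin n) K) (Set.range (rowF K G v₀)) by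
    intro θ hθ
    exact H (n * n) 0 (by omega) θ hθ (fun w hw => absurd hw (by omega))
  intro m
  induction m with
  | zero =>
    intro k hk θ hθ hcoords
    have hzero : θ = 0 := by
      apply derivation_ext
      intro i
      rw [hcoords i (lt_of_lt_of_le (key_lt_bound hG v₀ i) (by omega))]
      simp
    rw [hzero]
    exact Submodule.zero_mem _
  | succ m ih =>
    intro k hk θ hθ hcoords
    by_cases hex : ∃ w : Fin n, key G v₀ w = k
    · obtain ⟨w, hw⟩ := hex
      by_cases hwv : w = v₀
      · have hwk : key G v₀ v₀ = k := hwv ▸ hw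
        set c := θ (X v₀) with hc
        have h1 : θ - c • rowF K G v₀ v₀ ∈ derModule K n G :=
          sub_mem hθ (Submodule.smul_mem _ _ (rowF_mem_derModule K hG hac v₀ v₀))
        have h2 : ∀ j : Fin n, key G v₀ j < k + 1 → (θ - c • rowF K G v₀ v₀) (X j) = 0 := by
          intro j hj
          have hjw : j = v₀ := by
            by_cases hjv : j = v₀
            · exact hjv
            · have := key_v₀_lt hG hjv
              omega
          subst hjw
          rw [Derivation.sub_apply, Derivation.smul_apply, rowF_apply_v₀, smul_eq_mul,
            mul_one, ← hc, sub_self]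
        have h3 := ih (k + 1) (by omega) _ h1 h2
        have h4 : θ = (θ - c • rowF K G v₀ v₀) + c • rowF K G v₀ v₀ := by abel
        rw [h4]
        exact add_mem h3 (Submodule.smul_mem _ _ (Submodule.subset_span ⟨v₀, rfl⟩))
      · set p := parent G v₀ w with hpdef
        have hpk : key G v₀ p < k := hw ▸ key_parent_lt hG hwv
        have hpc : θ (X p) = 0 := hcoords p hpk
        have hdvd : (X w - X p : MvPolynomial (Fin n) K) ∣ θ (X w) := by
          have hmem := hθ w p (parent_adj hG hwv)
          rw [Ideal.mem_span_singleton, θ.map_sub, hpc, sub_zero] at hmem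
          exact hmem
        obtain ⟨h, hh⟩ := hdvd
        have h1 : θ - h • rowF K G v₀ w ∈ derModule K n G :=
          sub_mem hθ (Submodule.smul_mem _ _ (rowF_mem_derModule K hG hac v₀ w))
        have h2 : ∀ j : Fin n, key G v₀ j < k + 1 → (θ - h • rowF K G v₀ w) (X j) = 0 := by
          intro j hj
          rw [Derivation.sub_apply, Derivation.smul_apply, rowF_apply_ne K hwv, smul_eq_mul]
          by_cases hjw : j = w
          · subst hjw
            rw [if_pos (mem_cfin.mpr (self_mem_cset hG hwv)), ← hpdef, hh]
            ring
          · have hjk : key G v₀ j < k := by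
              have : key G v₀ j ≠ k := fun he => hjw (key_inj (he.trans hw.symm))
              omega
            have hjc : j ∉ cfin G v₀ w := by
              intro hjc
              have := key_lt_of_mem_cfin hG hac hwv hjc hjw
              omega
            rw [if_neg hjc, mul_zero, sub_zero]
            exact hcoords j hjk
        have h3 := ih (k + 1) (by omega) _ h1 h2
        have h4 : θ = (θ - h • rowF K G v₀ w) + h • rowF K G v₀ w := by abel
        rw [h4]
        exact add_mem h3 (Submodule.smul_mem _ _ (Submodule.subset_span ⟨w, rfl⟩))
    · refine ih (k + 1) (by omega) θ hθ ?_
      intro w hw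
      have : key G v₀ w ≠ k := fun he => hex ⟨w, he⟩
      exact hcoords w (by omega)

lemma range_rowF {G : SimpleGraph (Fin n)} (hG : G.Connected) (hac : G.IsAcyclic)
    {v₀ : Fin n} (hv₀ : 2 ≤ (G.neighborSet v₀).ncard) :
    Set.range (rowF K G v₀) = treeGens K n G v₀ := by
  apply Set.eq_of_subset_of_subset
  · rintro θ ⟨u, rfl⟩
    by_cases hu : u = v₀
    · subst hu
      left; left
      rw [rowF, if_pos rfl]
      rfl
    · by_cases hp : parent G v₀ u = v₀
      · left; right
        refine ⟨cfin G v₀ u, ?_, ?_⟩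
        · have h := isCompOf_cfin (G := G) (v₀ := v₀) hG hac hu
          rw [hp] at h
          exact h
        · rw [rowF, if_neg hu, hp]
      · right
        refine ⟨parent G v₀ u, cfin G v₀ u, hp, deg2_parent hG hu hp,
          isCompOf_cfin hG hac hu, ?_, ?_⟩
        · exact fun hmem => v₀_not_mem_cset hG hac hu (mem_cfin.mp hmem)
        · rw [rowF, if_neg hu]
  · rintro θ ((h | h) | h)
    · refine ⟨v₀, ?_⟩
      rw [rowF, if_pos rfl]
      exact h.symm
    · obtain ⟨C, hcomp, rfl⟩ := h
      obtain ⟨u, hu, hpv, hC⟩ := classify hG hac hcomp (Or.inl rfl)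
      exact ⟨u, by rw [rowF, if_neg hu, hpv, ← hC]⟩
    · obtain ⟨v, C, hv, _, hcomp, hv₀C, rfl⟩ := h
      obtain ⟨u, hu, hpv, hC⟩ := classify hG hac hcomp (Or.inr hv₀C)
      exact ⟨u, by rw [rowF, if_neg hu, hpv, ← hC]⟩

end AlgAux


theorem stmt18 (K : Type*) [Field K] (n : ℕ) (hn : 3 ≤ n) (G : SimpleGraph (Fin n))
    (hG : G.Connected) (hac : G.IsAcyclic) (v₀ : Fin n)
    (hv₀ : 2 ≤ (G.neighborSet v₀).ncard) :
    LinearIndependent (MvPolynomial (Fin n) K)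
      ((↑) : treeGens K n G v₀ →
        Derivation K (MvPolynomial (Fin n) K) (MvPolynomial (Fin n) K)) ∧
    Submodule.span (MvPolynomial (Fin n) K) (treeGens K n G v₀) = derModule K n G ∧
    Module.Free (MvPolynomial (Fin n) K) ↥(derModule K n G) := by
  classical
  have hrange := range_rowF K hG hac hv₀
  have hli := rowF_linearIndependent K hG hac v₀
  have hspan : Submodule.span (MvPolynomial (Fin n) K) (Set.range (rowF K G v₀))
      = derModule K n G := by
    apply le_antisymm
    · rw [Submodule.span_le]
      exact Set.range_subset_iff.mpr (fun u => rowF_mem_derModule K hG hac v₀ u)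
    · exact span_rowF_ge K hG hac v₀
  refine ⟨?_, ?_, ?_⟩
  · have h : LinearIndependent (MvPolynomial (Fin n) K) ((↑) : Set.range (rowF K G v₀) →
        Derivation K (MvPolynomial (Fin n) K) (MvPolynomial (Fin n) K)) :=
      (linearIndepOn_id_range_iff hli.injective).mpr hli
    rwa [hrange] at h
  · rw [← hrange]
    exact hspan
  · have b := Module.Basis.span hli
    rw [hspan] at b
    exact Module.Free.of_basis b
end
end
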